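/- arXiv:1109.4785 — 3 statements merged into one kernel-verified Lean document; each statement's English description precedes it below -/
import Mathlib

section
/- Let (X,μ) be a non-atomic probability space with tree T. For every I ∈ T and every a ∈ (0,1) there exists a subfamily F(I) ⊆ T of pairwise disjoint subsets of I such that Σ_{J ∈ F(I)} μ(J) = (1−a) μ(I). -/
/-!
Starting from `K₀ = I` with budget `r₀ = (1 - a) μ(I) < μ(I)`, descend through the tree: the
children of `Kₘ` are enumerated and the longest initial segment `Gₘ` whose union still fits into
the budget `rₘ` is taken into the family; the next child `Kₘ₊₁` overshoots, so the remaining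
budget `rₘ₊₁ = rₘ - μ(⋃ Gₘ)` is smaller than `μ(Kₘ₊₁)`. The sets of `Gₘ` lie in `Kₘ \ Kₘ₊₁`,
which makes the family disjoint, and `rₘ < μ(Kₘ) → 0` because the generations of the tree shrink,
so the measures of the chosen sets add up to the whole budget.
-/

open MeasureTheory Set

/-- The generations of a tree-like family: `gen child 0 = {univ}`,
`gen child (m+1) = ⋃_{I ∈ gen child m} child I`. -/
def gen {X : Type*} (child : Set X → Set (Set X)) : ℕ → Set (Set X)
  | 0 => {Set.univ}
  | (m + 1) => ⋃ I ∈ gen child m, child I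

/-- A tree on a measure space, in the sense of the theory of the dyadic maximal operator. -/
structure DyadicTree {X : Type*} [MeasurableSpace X] (μ : Measure X) where
  child : Set X → Set (Set X)
  mem : Set (Set X)
  univ_mem : Set.univ ∈ mem
  measurableSet : ∀ I ∈ mem, MeasurableSet I
  pos : ∀ I ∈ mem, 0 < μ I
  child_sub : ∀ I ∈ mem, child I ⊆ mem
  child_countable : ∀ I ∈ mem, (child I).Countable
  child_two : ∀ I ∈ mem, ∃ J K, J ∈ child I ∧ K ∈ child I ∧ J ≠ K
  child_subset : ∀ I ∈ mem, ∀ J ∈ child I, J ⊆ I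
  child_disjoint : ∀ I ∈ mem, (child I).Pairwise Disjoint
  child_union : ∀ I ∈ mem, ⋃₀ child I = I
  mem_eq : mem = ⋃ m, gen child m
  shrink : Filter.Tendsto (fun m => ⨆ I ∈ gen child m, μ I) Filter.atTop (nhds 0)

/-- The dyadic maximal operator associated to a family `T` of sets. -/
noncomputable def maximal {X : Type*} [MeasurableSpace X] (μ : Measure X)
    (T : Set (Set X)) (φ : X → ℝ) (x : X) : ℝ :=
  sSup {r : ℝ | ∃ I ∈ T, x ∈ I ∧ r = (∫ y in I, |φ y| ∂μ) / (μ I).toReal}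

/-- The decreasing rearrangement on `(0,1]` of a measurable function. -/
noncomputable def rearr {X : Type*} [MeasurableSpace X] (μ : Measure X)
    (ψ : X → ℝ) (t : ℝ) : ℝ :=
  sInf {s : ℝ | 0 ≤ s ∧ (μ {x | s < |ψ x|}).toReal ≤ t}

open Filter ENNReal Topology Function

theorem Antitone.pairwise_disjoint_on_sdiff_succ {α : Type*} {s : ℕ → Set α} (hs : Antitone s) :
    Pairwise (Disjoint on fun n => s n \ s (n + 1)) :=
  (pairwise_disjoint_on _).2 fun _ _ hmn =>
    disjoint_sdiff_left.mono_right (sdiff_subset.trans (hs (Nat.succ_le_of_lt hmn)))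

theorem ENNReal.tsum_eq_of_eq_add_of_tendsto_zero {s r : ℕ → ℝ≥0∞}
    (h : ∀ n, r n = s n + r (n + 1)) (hr : Tendsto r atTop (𝓝 0)) : ∑' n, s n = r 0 := by
  have hpartial : ∀ n, (∑ k ∈ Finset.range n, s k) + r n = r 0 := by
    intro n
    induction n with
    | zero => simp
    | succ n ih => rw [Finset.sum_range_succ, add_assoc, ← h n, ih]
  have hlim := (ENNReal.tendsto_nat_tsum s).add hr
  rw [add_zero] at hlim
  exact tendsto_nhds_unique hlim (by simp only [hpartial]; exact tendsto_const_nhds)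

theorem exists_measure_sUnion_le_lt_add {X : Type*} [MeasurableSpace X] (μ : Measure X)
    {C : Set (Set X)} (hC : C.Countable) {r : ℝ≥0∞} (hr : r < μ (⋃₀ C)) :
    ∃ G ⊆ C, ∃ K ∈ C, K ∉ G ∧ μ (⋃₀ G) ≤ r ∧ r < μ (⋃₀ G) + μ K := by
  have hne : C.Nonempty := nonempty_iff_ne_empty.2 fun h => by simp [h] at hr
  obtain ⟨f, rfl⟩ := hC.exists_eq_range hne
  set U : ℕ → Set X := fun n => ⋃ k < n, f k
  have hU : Monotone U := fun m n hmn => biUnion_mono (Iio_subset_Iio hmn) fun _ _ => le_rfl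
  have hUnion : ⋃ n, U n = ⋃₀ range f := by rw [sUnion_range]; exact biUnion_lt_eq_iUnion
  have hlim := tendsto_measure_iUnion_atTop (μ := μ) hU
  rw [hUnion] at hlim
  obtain ⟨M, hM, hM1⟩ := Nat.exists_not_and_succ_of_not_zero_of_exists
    (p := fun n => r < μ (U n)) (by simp [U]) ((tendsto_order.1 hlim).1 r hr).exists
  rw [not_lt] at hM
  have hU1 : U (M + 1) = U M ∪ f M := biUnion_lt_succ f M
  have hGU : ⋃₀ (f '' Iio M) = U M := sUnion_image _ _
  refine ⟨f '' Iio M, image_subset_range _ _, f M, mem_range_self M, ?_, hGU ▸ hM, ?_⟩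
  · rintro ⟨k, hk, hfk⟩
    have : U (M + 1) = U M := by
      rw [hU1, union_eq_self_of_subset_right (hfk ▸ subset_biUnion_of_mem hk)]
    exact (this ▸ hM1).not_ge hM
  · rw [hGU]
    exact hM1.trans_le (hU1 ▸ measure_union_le _ _)

namespace DyadicTree

variable {X : Type*} [MeasurableSpace X] {μ : Measure X} (T : DyadicTree μ)

theorem exists_mem_gen {I : Set X} (hI : I ∈ T.mem) : ∃ m, I ∈ gen T.child m :=
  mem_iUnion.1 (T.mem_eq ▸ hI)

theorem tendsto_measure_of_child_chain {K : ℕ → Set X} (hK₀ : K 0 ∈ T.mem)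
    (hK : ∀ m, K (m + 1) ∈ T.child (K m)) : Tendsto (fun m => μ (K m)) atTop (𝓝 0) := by
  obtain ⟨m₀, hm₀⟩ := T.exists_mem_gen hK₀
  have hgen : ∀ m, K m ∈ gen T.child (m₀ + m) := by
    intro m
    induction m with
    | zero => exact hm₀
    | succ m ih => exact mem_iUnion₂.2 ⟨K m, ih, hK m⟩
  exact tendsto_of_tendsto_of_tendsto_of_le_of_le tendsto_const_nhds
    (T.shrink.comp (tendsto_atTop_mono (Nat.le_add_left · m₀) tendsto_id)) (fun _ => zero_le)
    fun m => le_biSup (fun J => μ J) (hgen m)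

theorem exists_child_measure_sUnion_add {K : Set X} (hK : K ∈ T.mem) {r : ℝ≥0∞} (hr : r < μ K) :
    ∃ G ⊆ T.child K, ∃ K' ∈ T.child K, K' ∉ G ∧ ∃ r' < μ K', r = μ (⋃₀ G) + r' := by
  rw [← T.child_union K hK] at hr
  obtain ⟨G, hG, K', hK', hK'G, hle, hlt⟩ :=
    exists_measure_sUnion_le_lt_add μ (T.child_countable K hK) hr
  have hfin : μ (⋃₀ G) ≠ ∞ := (hle.trans_lt (hr.trans_le le_top)).ne
  exact ⟨G, hG, K', hK', hK'G, r - μ (⋃₀ G), (ENNReal.sub_lt_iff_lt_left hfin hle).2 hlt,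
    (add_tsub_cancel_of_le hle).symm⟩

/-- `K` is the chain of visited sets, `G m` the children of `K m` taken into the family and
`r m` the budget left on arrival at `K m`. -/
structure Descent (I : Set X) (t : ℝ≥0∞) where
  K : ℕ → Set X
  G : ℕ → Set (Set X)
  r : ℕ → ℝ≥0∞
  K_zero : K 0 = I
  r_zero : r 0 = t
  K_mem : ∀ m, K m ∈ T.mem
  K_succ_mem_child : ∀ m, K (m + 1) ∈ T.child (K m)
  G_subset_child : ∀ m, G m ⊆ T.child (K m)
  K_succ_notMem_G : ∀ m, K (m + 1) ∉ G m
  r_lt : ∀ m, r m < μ (K m)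
  r_eq : ∀ m, r m = μ (⋃₀ G m) + r (m + 1)

theorem nonempty_descent {I : Set X} (hI : I ∈ T.mem) {t : ℝ≥0∞} (ht : t < μ I) :
    Nonempty (T.Descent I t) := by
  let State := {p : Set X × ℝ≥0∞ // p.1 ∈ T.mem ∧ p.2 < μ p.1}
  have hstep : ∀ p : State, ∃ q : State, ∃ G ⊆ T.child p.1.1,
      q.1.1 ∈ T.child p.1.1 ∧ q.1.1 ∉ G ∧ p.1.2 = μ (⋃₀ G) + q.1.2 := by
    rintro ⟨⟨K, r⟩, hK, hr⟩
    obtain ⟨G, hG, K', hK', hK'G, r', hr', heq⟩ := T.exists_child_measure_sUnion_add hK hr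
    exact ⟨⟨(K', r'), T.child_sub K hK hK', hr'⟩, G, hG, hK', hK'G, heq⟩
  choose next G hG hnext hnextG heq using hstep
  let s : ℕ → State := fun m => next^[m] ⟨(I, t), hI, ht⟩
  have hs : ∀ m, s (m + 1) = next (s m) := fun m => Function.iterate_succ_apply' next m _
  exact ⟨{
    K := fun m => (s m).1.1
    G := fun m => G (s m)
    r := fun m => (s m).1.2
    K_zero := rfl
    r_zero := rfl
    K_mem := fun m => (s m).2.1
    K_succ_mem_child := fun m => hs m ▸ hnext (s m)
    G_subset_child := fun m => hG (s m)
    K_succ_notMem_G := fun m => hs m ▸ hnextG (s m)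
    r_lt := fun m => (s m).2.2
    r_eq := fun m => hs m ▸ heq (s m) }⟩

namespace Descent

variable {T} {I : Set X} {t : ℝ≥0∞} (D : T.Descent I t)

def family : Set (Set X) := ⋃ m, D.G m

theorem antitone_K : Antitone D.K :=
  antitone_nat_of_succ_le fun m => T.child_subset _ (D.K_mem m) _ (D.K_succ_mem_child m)

theorem mem_of_mem_G {m : ℕ} {J : Set X} (hJ : J ∈ D.G m) : J ∈ T.mem :=
  T.child_sub _ (D.K_mem m) (D.G_subset_child m hJ)

theorem subset_sdiff_of_mem_G {m : ℕ} {J : Set X} (hJ : J ∈ D.G m) :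
    J ⊆ D.K m \ D.K (m + 1) :=
  have hJ' := D.G_subset_child m hJ
  subset_sdiff.2 ⟨T.child_subset _ (D.K_mem m) _ hJ',
    T.child_disjoint _ (D.K_mem m) hJ' (D.K_succ_mem_child m)
      fun h => D.K_succ_notMem_G m (h ▸ hJ)⟩

theorem countable_G (m : ℕ) : (D.G m).Countable :=
  (T.child_countable _ (D.K_mem m)).mono (D.G_subset_child m)

theorem measurableSet_sUnion_G (m : ℕ) : MeasurableSet (⋃₀ D.G m) :=
  .sUnion (D.countable_G m) fun _ hJ => T.measurableSet _ (D.mem_of_mem_G hJ)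

theorem family_subset_mem : D.family ⊆ T.mem := fun _ hJ =>
  let ⟨_, hm⟩ := mem_iUnion.1 hJ
  D.mem_of_mem_G hm

theorem countable_family : D.family.Countable := countable_iUnion D.countable_G

theorem subset_of_mem_family {J : Set X} (hJ : J ∈ D.family) : J ⊆ I :=
  let ⟨m, hm⟩ := mem_iUnion.1 hJ
  D.K_zero ▸ (D.subset_sdiff_of_mem_G hm).trans (sdiff_subset.trans (D.antitone_K (Nat.zero_le m)))

theorem pairwise_disjoint_family : D.family.Pairwise Disjoint := by
  rintro J₁ hJ₁ J₂ hJ₂ hne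
  obtain ⟨m, hm⟩ := mem_iUnion.1 hJ₁
  obtain ⟨n, hn⟩ := mem_iUnion.1 hJ₂
  obtain rfl | hmn := eq_or_ne m n
  · exact T.child_disjoint _ (D.K_mem m) (D.G_subset_child m hm) (D.G_subset_child m hn) hne
  · exact (D.antitone_K.pairwise_disjoint_on_sdiff_succ hmn).mono
      (D.subset_sdiff_of_mem_G hm) (D.subset_sdiff_of_mem_G hn)

theorem tsum_measure_family : ∑' J : D.family, μ J = t := by
  have hdisj : Pairwise (Disjoint on fun m => ⋃₀ D.G m) :=
    pairwise_disjoint_mono D.antitone_K.pairwise_disjoint_on_sdiff_succ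
      fun m => sUnion_subset fun _ => D.subset_sdiff_of_mem_G
  have hr : Tendsto D.r atTop (𝓝 0) :=
    tendsto_of_tendsto_of_tendsto_of_le_of_le tendsto_const_nhds
      (T.tendsto_measure_of_child_chain (D.K_mem 0) D.K_succ_mem_child) (fun _ => zero_le)
      fun m => (D.r_lt m).le
  rw [← measure_sUnion D.countable_family D.pairwise_disjoint_family
      fun J hJ => T.measurableSet J (D.family_subset_mem hJ),
    family, sUnion_iUnion, measure_iUnion hdisj D.measurableSet_sUnion_G]
  exact (ENNReal.tsum_eq_of_eq_add_of_tendsto_zero D.r_eq hr).trans D.r_zero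

end Descent

end DyadicTree

theorem stmt8_general {X : Type*} [MeasurableSpace X] (μ : Measure X)
    [IsProbabilityMeasure μ] (T : DyadicTree μ)
    (I : Set X) (hI : I ∈ T.mem) (a : ℝ) (ha : a ∈ Set.Ioo (0:ℝ) 1) :
    ∃ F : Set (Set X), F ⊆ T.mem ∧ F.Countable ∧ (∀ J ∈ F, J ⊆ I) ∧
      F.Pairwise Disjoint ∧
      ∑' J : F, μ (J : Set X) = ENNReal.ofReal (1 - a) * μ I := by
  have hlt : ENNReal.ofReal (1 - a) * μ I < μ I := by
    simpa using ENNReal.mul_lt_mul_left (T.pos I hI).ne' (measure_ne_top μ I)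
      (ENNReal.ofReal_lt_one.2 (by linarith [ha.1]))
  obtain ⟨D⟩ := T.nonempty_descent hI hlt
  exact ⟨D.family, D.family_subset_mem, D.countable_family, fun _ => D.subset_of_mem_family,
    D.pairwise_disjoint_family, D.tsum_measure_family⟩

/-- Lemma 2.1: for every `I` in a tree and `0 < a < 1` there is a disjoint subfamily
`F(I) ⊆ T` of subsets of `I` of total measure `(1-a) μ(I)`. -/
theorem stmt8 {X : Type*} [MeasurableSpace X] (μ : Measure X)
    [IsProbabilityMeasure μ] [NullSingletonClass μ] (T : DyadicTree μ)
    (I : Set X) (hI : I ∈ T.mem) (a : ℝ) (ha : a ∈ Set.Ioo (0:ℝ) 1) :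
    ∃ F : Set (Set X), F ⊆ T.mem ∧ F.Countable ∧ (∀ J ∈ F, J ⊆ I) ∧
      F.Pairwise Disjoint ∧
      ∑' J : F, μ (J : Set X) = ENNReal.ofReal (1 - a) * μ I :=
  stmt8_general μ T I hI a ha
end

section
/- Let p > 1 and 1 < q < p. Let f ∈ (0,1] and define ψ : (0,1] → [0,∞) by ψ(u) = ((p−1)/p) u^{−1/p} for 0 < u ≤ f^{p/(p−1)} and ψ(u) = 0 otherwise. Then ∫_0^1 ψ(u) du = f, sup_{λ>0} λ · |{ u ∈ (0,1] : ψ(u) ≥ λ }|^{1/p} = (p−1)/p, and for k ∈ (0,1]: ∫_0^k ((1/t) ∫_0^t ψ(u) du)^q dt equals (p/(p−q)) k^{1−q/p} if k ≤ f^{p/(p−1)}, and equals (q(p−1)/((p−q)(q−1))) f^{(p−q)/(p−1)} − (1/(q−1)) k^{1−q} f^q if f^{p/(p−1)} ≤ k ≤ 1. -/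
open MeasureTheory Set

/-! With `a = f ^ (p / (p - 1))`, the primitive of `ψ` is `t ↦ min t a ^ (1 - 1 / p)`. Hence the
Hardy average of `ψ` is `t ^ (-1 / p)` on `(0, a]` and `f / t` beyond `a`, while each level set
`{ψ ≥ l}` is the interval `(0, min a (((p - 1) / (p l)) ^ p)]`, so that
`l |{ψ ≥ l}| ^ (1 / p) = min (l a ^ (1 / p)) ((p - 1) / p)`. Everything then reduces to
integrating powers of `t`. -/

lemma integral_Ioc_zero_rpow {r k : ℝ} (hr : -1 < r) (hk : 0 ≤ k) :
    ∫ u in Ioc 0 k, u ^ r = k ^ (r + 1) / (r + 1) := by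
  rw [← intervalIntegral.integral_of_le hk, integral_rpow (Or.inl hr),
    Real.zero_rpow (by linarith), sub_zero]

lemma integral_Ioc_rpow {r a b : ℝ} (ha : 0 < a) (hab : a ≤ b) (hr : r ≠ -1) :
    ∫ u in Ioc a b, u ^ r = (b ^ (r + 1) - a ^ (r + 1)) / (r + 1) := by
  rw [← intervalIntegral.integral_of_le hab,
    integral_rpow (Or.inr ⟨hr, by simp [uIcc_of_le hab, ha.not_ge]⟩)]

lemma integrableOn_Ioc_zero_rpow {r k : ℝ} (hr : -1 < r) (hk : 0 ≤ k) :
    IntegrableOn (fun u : ℝ => u ^ r) (Ioc 0 k) :=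
  (intervalIntegrable_iff_integrableOn_Ioc_of_le hk).1
    (intervalIntegral.intervalIntegrable_rpow' hr)

lemma integrableOn_Ioc_rpow {r a b : ℝ} (ha : 0 < a) (hab : a ≤ b) :
    IntegrableOn (fun u : ℝ => u ^ r) (Ioc a b) :=
  (intervalIntegrable_iff_integrableOn_Ioc_of_le hab).1
    (intervalIntegral.intervalIntegrable_rpow (Or.inr (by simp [uIcc_of_le hab, ha.not_ge])))

lemma le_mul_rpow_neg_one_div_iff {c l p u : ℝ} (hc : 0 ≤ c) (hl : 0 < l) (hp : 0 < p)
    (hu : 0 < u) : l ≤ c * u ^ (-(1 / p)) ↔ u ≤ (c / l) ^ p := by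
  rw [Real.rpow_neg hu.le, ← div_eq_mul_inv, le_div_iff₀ (by positivity), mul_comm,
    ← le_div_iff₀ hl, one_div, Real.rpow_inv_le_iff_of_pos hu.le (by positivity) hp]

lemma min_rpow_of_nonneg {x y r : ℝ} (hx : 0 ≤ x) (hy : 0 ≤ y) (hr : 0 ≤ r) :
    min x y ^ r = min (x ^ r) (y ^ r) := by
  rcases le_total x y with h | h
  · rw [min_eq_left h, min_eq_left (Real.rpow_le_rpow hx h hr)]
  · rw [min_eq_right h, min_eq_right (Real.rpow_le_rpow hy h hr)]

lemma mul_min_rpow_one_div {a c l p : ℝ} (ha : 0 ≤ a) (hc : 0 ≤ c) (hl : 0 < l) (hp : 0 < p) :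
    l * min a ((c / l) ^ p) ^ (1 / p) = min (l * a ^ (1 / p)) c := by
  have hroot : ((c / l) ^ p) ^ (1 / p) = c / l := by
    rw [one_div, Real.rpow_rpow_inv (by positivity) hp.ne']
  rw [min_rpow_of_nonneg ha (by positivity) (by positivity), hroot, mul_min_of_nonneg _ _ hl.le,
    mul_div_cancel₀ _ hl.ne']

lemma neg_one_lt_neg_div {p q : ℝ} (hp : 1 < p) (hqp : q < p) : -1 < -(q / p) := by
  have : q / p < 1 := (div_lt_one (by linarith)).2 hqp
  linarith

noncomputable def extremal (p a u : ℝ) : ℝ :=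
  if u ≤ a then ((p - 1) / p) * u ^ (-(1 / p)) else 0

section Extremal

variable {p a : ℝ}

lemma extremal_eq_indicator :
    extremal p a = (Iic a).indicator (fun u => ((p - 1) / p) * u ^ (-(1 / p))) := by
  ext u
  simp [extremal, indicator]

lemma integral_Ioc_extremal (hp : 1 < p) (ha : 0 ≤ a) {t : ℝ} (ht : 0 ≤ t) :
    ∫ u in Ioc 0 t, extremal p a u = min t a ^ ((p - 1) / p) := by
  have hexp : -(1 / p) + 1 = (p - 1) / p := by field_simp; ring
  rw [extremal_eq_indicator, setIntegral_indicator measurableSet_Iic, Ioc_inter_Iic,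
    integral_const_mul, integral_Ioc_zero_rpow (neg_one_lt_neg_div hp hp) (le_min ht ha), hexp,
    mul_div_cancel₀ _ (by positivity)]

lemma setOf_le_extremal_eq_Ioc (hp : 1 < p) {b l : ℝ} (hab : a ≤ b) (hl : 0 < l) :
    {u ∈ Ioc 0 b | l ≤ extremal p a u} = Ioc 0 (min a (((p - 1) / p / l) ^ p)) := by
  have hc : 0 ≤ (p - 1) / p := div_nonneg (by linarith) (by linarith)
  ext u
  simp only [extremal, mem_ofPred_eq, mem_Ioc, le_min_iff]
  by_cases hua : u ≤ a
  · simp only [hua, if_true, true_and]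
    constructor
    · rintro ⟨⟨hu, -⟩, hlu⟩
      exact ⟨hu, (le_mul_rpow_neg_one_div_iff hc hl (by linarith) hu).1 hlu⟩
    · rintro ⟨hu, hlu⟩
      exact ⟨⟨hu, hua.trans hab⟩,
        (le_mul_rpow_neg_one_div_iff hc hl (by linarith) hu).2 hlu⟩
  · simp only [hua, if_false, false_and, and_false, iff_false, not_and, not_le]
    exact fun _ => hl

lemma sSup_weakLp_extremal (hp : 1 < p) (ha : 0 < a) (ha₁ : a ≤ 1) :
    sSup {r : ℝ | ∃ l : ℝ, 0 < l ∧
        r = l * (volume {u ∈ Ioc (0:ℝ) 1 | l ≤ extremal p a u}).toReal ^ (1 / p)} =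
      (p - 1) / p := by
  have hc : 0 < (p - 1) / p := div_pos (by linarith) (by linarith)
  have hr : ∀ l : ℝ, 0 < l →
      l * (volume {u ∈ Ioc (0:ℝ) 1 | l ≤ extremal p a u}).toReal ^ (1 / p) =
        min (l * a ^ (1 / p)) ((p - 1) / p) := fun l hl => by
    rw [setOf_le_extremal_eq_Ioc hp ha₁ hl, Real.volume_Ioc, sub_zero,
      ENNReal.toReal_ofReal (by positivity), mul_min_rpow_one_div ha.le hc.le hl (by linarith)]
  refine IsGreatest.csSup_eq ⟨⟨(p - 1) / p / a ^ (1 / p), by positivity, ?_⟩, ?_⟩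
  · rw [hr _ (by positivity), div_mul_cancel₀ _ (by positivity), min_self]
  · rintro r ⟨l, hl, rfl⟩
    rw [hr l hl]
    exact min_le_right _ _

lemma hardyAverage_extremal_of_le (hp : 1 < p) (q : ℝ) {t : ℝ} (ht : 0 < t) (hta : t ≤ a) :
    ((∫ u in Ioc 0 t, extremal p a u) / t) ^ q = t ^ (-(q / p)) := by
  rw [integral_Ioc_extremal hp (ht.le.trans hta) ht.le, min_eq_left hta,
    ← Real.rpow_sub_one ht.ne', ← Real.rpow_mul ht.le]
  congr 1
  field_simp
  ring

lemma hardyAverage_extremal_of_ge (hp : 1 < p) (ha : 0 ≤ a) (q : ℝ) {t : ℝ} (hat : a ≤ t)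
    (ht : 0 < t) :
    ((∫ u in Ioc 0 t, extremal p a u) / t) ^ q = (a ^ ((p - 1) / p)) ^ q * t ^ (-q) := by
  rw [integral_Ioc_extremal hp ha ht.le, min_eq_right hat,
    Real.div_rpow (by positivity) ht.le, Real.rpow_neg ht.le, div_eq_mul_inv]

lemma integral_hardyAverage_extremal_of_le (hp : 1 < p) {q k : ℝ} (hqp : q < p) (hk : 0 ≤ k)
    (hka : k ≤ a) :
    ∫ t in Ioc 0 k, ((∫ u in Ioc 0 t, extremal p a u) / t) ^ q =
      (p / (p - q)) * k ^ (1 - q / p) := by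
  have hexp : 1 - q / p = (p - q) / p := by field_simp
  rw [setIntegral_congr_fun measurableSet_Ioc
      (fun t ht => hardyAverage_extremal_of_le hp q ht.1 (ht.2.trans hka)),
    integral_Ioc_zero_rpow (neg_one_lt_neg_div hp hqp) hk, neg_add_eq_sub, div_eq_inv_mul,
    hexp, inv_div, ← hexp]

lemma integral_hardyAverage_extremal_of_ge (hp : 1 < p) {q k : ℝ} (hq : q ≠ 1) (hqp : q < p)
    (ha : 0 < a) (hak : a ≤ k) :
    ∫ t in Ioc 0 k, ((∫ u in Ioc 0 t, extremal p a u) / t) ^ q =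
      (q * (p - 1) / ((p - q) * (q - 1))) * a ^ (1 - q / p) -
        (1 / (q - 1)) * k ^ (1 - q) * (a ^ ((p - 1) / p)) ^ q := by
  have hI₁ : IntegrableOn (fun t => ((∫ u in Ioc 0 t, extremal p a u) / t) ^ q) (Ioc 0 a) :=
    (integrableOn_Ioc_zero_rpow (neg_one_lt_neg_div hp hqp) ha.le).congr_fun
      (fun t ht => (hardyAverage_extremal_of_le hp q ht.1 ht.2).symm) measurableSet_Ioc
  have hI₂ : IntegrableOn (fun t => ((∫ u in Ioc 0 t, extremal p a u) / t) ^ q) (Ioc a k) :=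
    IntegrableOn.congr_fun ((integrableOn_Ioc_rpow ha hak).const_mul _)
      (fun t ht => (hardyAverage_extremal_of_ge hp ha.le q ht.1.le (ha.trans ht.1)).symm)
      measurableSet_Ioc
  have hpow : (a ^ ((p - 1) / p)) ^ q * a ^ (1 - q) = a ^ (1 - q / p) := by
    rw [← Real.rpow_mul ha.le, ← Real.rpow_add ha]
    congr 1
    field_simp
    ring
  rw [← Ioc_union_Ioc_eq_Ioc ha.le hak,
    setIntegral_union (Ioc_disjoint_Ioc_of_le le_rfl) measurableSet_Ioc hI₁ hI₂,
    integral_hardyAverage_extremal_of_le hp hqp ha.le le_rfl,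
    setIntegral_congr_fun measurableSet_Ioc
      (fun t ht => hardyAverage_extremal_of_ge hp ha.le q ht.1.le (ha.trans ht.1)),
    integral_const_mul, integral_Ioc_rpow ha hak (by contrapose! hq; linarith), neg_add_eq_sub,
    mul_div_assoc', mul_sub, hpow]
  have hpq : p - q ≠ 0 := by linarith
  have hq₁ : q - 1 ≠ 0 := sub_ne_zero.2 hq
  have hq₂ : 1 - q ≠ 0 := sub_ne_zero.2 hq.symm
  field_simp
  ring

end Extremal

/-- Properties of the extremal function `ψ(u) = ((p-1)/p) u^{-1/p}` on `(0, f^{p/(p-1)}]`: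
its integral is `f`, its weak-`L^p` quasinorm is `(p-1)/p`, and the `q`-th power of its
Hardy averages integrates explicitly over `(0,k]`. -/
theorem stmt10 (p q : ℝ) (hp : 1 < p) (hq : 1 < q) (hqp : q < p)
    (f : ℝ) (hf : f ∈ Set.Ioc (0:ℝ) 1)
    (ψ : ℝ → ℝ)
    (hψ : ∀ u : ℝ, ψ u = if u ≤ f ^ (p / (p - 1)) then ((p - 1) / p) * u ^ (-(1 / p)) else 0) :
    (∫ u in Set.Ioc (0:ℝ) 1, ψ u = f) ∧
    (sSup {r : ℝ | ∃ l : ℝ, 0 < l ∧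
        r = l * (volume {u ∈ Set.Ioc (0:ℝ) 1 | l ≤ ψ u}).toReal ^ (1 / p)} = (p - 1) / p) ∧
    (∀ k ∈ Set.Ioc (0:ℝ) 1,
      (k ≤ f ^ (p / (p - 1)) →
        ∫ t in Set.Ioc (0:ℝ) k, ((∫ u in Set.Ioc (0:ℝ) t, ψ u) / t) ^ q =
          (p / (p - q)) * k ^ (1 - q / p)) ∧
      (f ^ (p / (p - 1)) ≤ k →
        ∫ t in Set.Ioc (0:ℝ) k, ((∫ u in Set.Ioc (0:ℝ) t, ψ u) / t) ^ q =
          (q * (p - 1) / ((p - q) * (q - 1))) * f ^ ((p - q) / (p - 1)) -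
            (1 / (q - 1)) * k ^ (1 - q) * f ^ q)) := by
  obtain ⟨hf₀, hf₁⟩ := hf
  obtain rfl : ψ = extremal p (f ^ (p / (p - 1))) := funext hψ
  have hp₁ : 0 < p - 1 := by linarith
  set a := f ^ (p / (p - 1))
  have ha₀ : 0 < a := by positivity
  have ha₁ : a ≤ 1 := Real.rpow_le_one hf₀.le hf₁ (by positivity)
  have ha_pow : ∀ s, a ^ s = f ^ (p / (p - 1) * s) := fun s => (Real.rpow_mul hf₀.le _ _).symm
  have haf : a ^ ((p - 1) / p) = f := by
    rw [ha_pow, div_mul_div_cancel₀ hp₁.ne', div_self (by linarith), Real.rpow_one]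
  refine ⟨?_, sSup_weakLp_extremal hp ha₀ ha₁, fun k ⟨hk₀, _⟩ =>
    ⟨integral_hardyAverage_extremal_of_le hp hqp hk₀.le, fun hak => ?_⟩⟩
  · rw [integral_Ioc_extremal hp ha₀.le zero_le_one, min_eq_right ha₁, haf]
  · rw [integral_hardyAverage_extremal_of_ge hp hq.ne' hqp ha₀ hak, haf, ha_pow (1 - q / p)]
    congr 3
    field_simp
end

section
/- Let g, h : (0,1] → [0,∞) be non-increasing and integrable, G : [0,∞) → [0,∞) non-decreasing, and k ∈ (0,1]. For a ∈ (0,1) let m_a be the integer with (1−a)^{m_a+1} ≤ k < (1−a)^{m_a}. Then liminf_{a→0^+} Σ_{l≥0} G( (1−a)^{−(m_a+l)} ∫_0^{(1−a)^{m_a+l}} g(u) du ) ∫_{(1−a)^{m_a+l+1}}^{(1−a)^{m_a+l}} h(t) dt ≥ ∫_0^k G((1/t)∫_0^t g(u) du) h(t) dt. -/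
open MeasureTheory Set

/-!
Write `Φ t = G ((1/t) ∫₀ᵗ g)`. Averages of a non-increasing function over `(0, t]` decrease in `t`,
so `Φ` is non-increasing (and non-negative, as `G` is). For `q = 1 - a` the sum is
`S(a) = ∑ₗ Φ(bₗ) ∫_{Iₗ} h` with `bₗ = q^(mₐ+l)` and `Iₗ = (bₗ₊₁, bₗ]`. Each term is at most
`∫_{Iₗ} Φ h`; and since `h` is non-increasing and `|Iₗ₊₁| = q |Iₗ|`, the term `l + 1` is at least
`q ∫_{Iₗ} Φ h`. Hence `q ∫₀ᵏ Φ h ≤ S(a) ≤ ∫₀¹ Φ h`, and `q → 1` gives the claim.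
-/

open Filter Topology

section AntitoneIntegral

variable {f : ℝ → ℝ} {x y z q : ℝ}

lemma AntitoneOn.mul_sub_le_setIntegral_Ioc (hf : AntitoneOn f (Ioc x y))
    (hfi : IntegrableOn f (Ioc x y)) (hxy : x ≤ y) :
    f y * (y - x) ≤ ∫ t in Ioc x y, f t := by
  rcases hxy.eq_or_lt with rfl | hxy
  · simp
  have := setIntegral_ge_of_const_le_real measurableSet_Ioc measure_Ioc_lt_top.ne
    (fun t ht => hf ht (right_mem_Ioc.2 hxy) ht.2) hfi
  rwa [Real.volume_real_Ioc_of_le hxy.le] at this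

lemma AntitoneOn.setIntegral_Ioc_le_mul_sub (hf : AntitoneOn f (Icc x y)) (hxy : x ≤ y) :
    ∫ t in Ioc x y, f t ≤ f x * (y - x) := by
  calc ∫ t in Ioc x y, f t ≤ ∫ _ in Ioc x y, f x :=
        setIntegral_mono_on ((hf.integrableOn_isCompact isCompact_Icc).mono_set Ioc_subset_Icc_self)
          (integrableOn_const measure_Ioc_lt_top.ne) measurableSet_Ioc
          fun t ht => hf (left_mem_Icc.2 hxy) (Ioc_subset_Icc_self ht) ht.1.le
    _ = f x * (y - x) := by
        rw [setIntegral_const, smul_eq_mul, Real.volume_real_Ioc_of_le hxy, mul_comm]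

lemma AntitoneOn.mul_setIntegral_Ioc_le_setIntegral_Ioc (hf : AntitoneOn f (Icc z x))
    (hzy : z < y) (hyx : y ≤ x) (hq : 0 ≤ q) (hgap : y - z = q * (x - y)) :
    q * ∫ t in Ioc y x, f t ≤ ∫ t in Ioc z y, f t :=
  calc q * ∫ t in Ioc y x, f t ≤ q * (f y * (x - y)) :=
        mul_le_mul_of_nonneg_left
          ((hf.mono (Icc_subset_Icc hzy.le le_rfl)).setIntegral_Ioc_le_mul_sub hyx) hq
    _ = f y * (y - z) := by rw [hgap]; ring
    _ ≤ ∫ t in Ioc z y, f t := by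
        have hf' : AntitoneOn f (Icc z y) := hf.mono (Icc_subset_Icc le_rfl hyx)
        exact (hf'.mono Ioc_subset_Icc_self).mul_sub_le_setIntegral_Ioc
          ((hf'.integrableOn_isCompact isCompact_Icc).mono_set Ioc_subset_Icc_self) hzy.le

end AntitoneIntegral

lemma antitoneOn_integral_Ioc_zero_div {g : ℝ → ℝ} {c : ℝ} (hg : AntitoneOn g (Ioc 0 c))
    (hgi : IntegrableOn g (Ioc 0 c)) :
    AntitoneOn (fun t => (∫ u in Ioc 0 t, g u) / t) (Ioc 0 c) := by
  intro s hs t ht hst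
  have hsplit : ∫ u in Ioc 0 t, g u = (∫ u in Ioc 0 s, g u) + ∫ u in Ioc s t, g u := by
    rw [← setIntegral_union (Ioc_disjoint_Ioc_of_le le_rfl) measurableSet_Ioc
      (hgi.mono_set (Ioc_subset_Ioc_right hs.2)) (hgi.mono_set (Ioc_subset_Ioc hs.1.le ht.2)),
      Ioc_union_Ioc_eq_Ioc hs.1.le hst]
  have hinit : g s * (s - 0) ≤ ∫ u in Ioc 0 s, g u :=
    (hg.mono (Ioc_subset_Ioc_right hs.2)).mul_sub_le_setIntegral_Ioc
      (hgi.mono_set (Ioc_subset_Ioc_right hs.2)) hs.1.le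
  have htail : ∫ u in Ioc s t, g u ≤ g s * (t - s) :=
    (hg.mono (Icc_subset_Ioc hs.1 ht.2)).setIntegral_Ioc_le_mul_sub hst
  rw [div_le_div_iff₀ ht.1 hs.1, hsplit]
  nlinarith [mul_le_mul_of_nonneg_left htail hs.1.le,
    mul_le_mul_of_nonneg_right hinit (sub_nonneg.2 hst)]

lemma iUnion_Ioc_succ_eq_Ioc_zero {b : ℕ → ℝ} (hb : Antitone b) (hpos : ∀ n, 0 < b n)
    (hlim : Tendsto b atTop (𝓝 0)) : ⋃ n, Ioc (b (n + 1)) (b n) = Ioc 0 (b 0) := by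
  classical
  refine Subset.antisymm
    (iUnion_subset fun n t ht => ⟨(hpos _).trans ht.1, ht.2.trans (hb n.zero_le)⟩) fun t ht => ?_
  have hex : ∃ n, b n < t := (hlim.eventually_lt_const ht.1).exists
  obtain ⟨n, hn⟩ : ∃ n, Nat.find hex = n + 1 :=
    Nat.exists_eq_add_one.2 (Nat.pos_of_ne_zero fun h0 => (Nat.find_spec hex).not_ge (h0 ▸ ht.2))
  exact mem_iUnion.2 ⟨n, hn ▸ Nat.find_spec hex, not_lt.1 (Nat.find_min hex (hn ▸ n.lt_succ_self))⟩

lemma hasSum_setIntegral_Ioc_succ {f : ℝ → ℝ} {b : ℕ → ℝ} (hb : Antitone b) (hpos : ∀ n, 0 < b n)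
    (hlim : Tendsto b atTop (𝓝 0)) (hf : IntegrableOn f (Ioc 0 (b 0))) :
    HasSum (fun n => ∫ t in Ioc (b (n + 1)) (b n), f t) (∫ t in Ioc 0 (b 0), f t) := by
  rw [← iUnion_Ioc_succ_eq_Ioc_zero hb hpos hlim] at hf ⊢
  exact hasSum_integral_iUnion (fun _ => measurableSet_Ioc) hb.pairwise_disjoint_on_Ioc_succ hf

section WeightedIntegral

variable {Φ h : ℝ → ℝ} {x y : ℝ}

lemma AntitoneOn.mul_setIntegral_Ioc_le_setIntegral_mul (hΦ : AntitoneOn Φ (Icc x y))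
    (hh0 : ∀ t ∈ Ioc x y, 0 ≤ h t) (hhi : IntegrableOn h (Ioc x y))
    (hi : IntegrableOn (fun t => Φ t * h t) (Ioc x y)) :
    Φ y * ∫ t in Ioc x y, h t ≤ ∫ t in Ioc x y, Φ t * h t := by
  rw [← integral_const_mul]
  exact setIntegral_mono_on (hhi.const_mul _) hi measurableSet_Ioc fun t ht =>
    mul_le_mul_of_nonneg_right
      (hΦ (Ioc_subset_Icc_self ht) (right_mem_Icc.2 (ht.1.le.trans ht.2)) ht.2) (hh0 t ht)

lemma AntitoneOn.setIntegral_mul_le_mul_setIntegral_Ioc (hΦ : AntitoneOn Φ (Icc x y))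
    (hh0 : ∀ t ∈ Ioc x y, 0 ≤ h t) (hhi : IntegrableOn h (Ioc x y))
    (hi : IntegrableOn (fun t => Φ t * h t) (Ioc x y)) :
    ∫ t in Ioc x y, Φ t * h t ≤ Φ x * ∫ t in Ioc x y, h t := by
  rw [← integral_const_mul]
  exact setIntegral_mono_on hi (hhi.const_mul _) measurableSet_Ioc fun t ht =>
    mul_le_mul_of_nonneg_right
      (hΦ (left_mem_Icc.2 (ht.1.le.trans ht.2)) (Ioc_subset_Icc_self ht) ht.1.le) (hh0 t ht)

end WeightedIntegral

noncomputable def riemannSum (Φ h : ℝ → ℝ) (b : ℕ → ℝ) : ℝ :=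
  ∑' l, Φ (b l) * ∫ t in Ioc (b (l + 1)) (b l), h t

section GeometricPartition

variable {Φ h : ℝ → ℝ} {b : ℕ → ℝ} {q : ℝ}

lemma riemannSum_nonneg (hΦ0 : ∀ l, 0 ≤ Φ (b l))
    (hh0 : ∀ l, ∀ t ∈ Ioc (b (l + 1)) (b l), 0 ≤ h t) : 0 ≤ riemannSum Φ h b :=
  tsum_nonneg fun l => mul_nonneg (hΦ0 l) (setIntegral_nonneg measurableSet_Ioc (hh0 l))

lemma eq_pow_mul_of_succ_eq_mul (hb : ∀ n, b (n + 1) = q * b n) (n : ℕ) : b n = q ^ n * b 0 := by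
  induction n with
  | zero => simp
  | succ n ih => rw [hb, ih, pow_succ]; ring

/-- Shifting the lower Riemann sum by one interval of a geometric partition costs exactly the
factor `q`, whence the lower bound. -/
lemma riemannSum_mem_Icc_of_geometric (hq0 : 0 < q) (hq1 : q < 1) (hb0 : 0 < b 0)
    (hb : ∀ n, b (n + 1) = q * b n) (hΦ : AntitoneOn Φ (Ioc 0 (b 0)))
    (hΦ0 : ∀ t ∈ Ioc 0 (b 0), 0 ≤ Φ t) (hh : AntitoneOn h (Ioc 0 (b 0)))
    (hh0 : ∀ t ∈ Ioc 0 (b 0), 0 ≤ h t) (hint : IntegrableOn (fun t => Φ t * h t) (Ioc 0 (b 0))) :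
    riemannSum Φ h b ∈
      Icc (q * ∫ t in Ioc 0 (b 0), Φ t * h t) (∫ t in Ioc 0 (b 0), Φ t * h t) := by
  have hpos : ∀ n, 0 < b n := fun n =>
    eq_pow_mul_of_succ_eq_mul hb n ▸ mul_pos (pow_pos hq0 n) hb0
  have hstep : ∀ n, b (n + 1) < b n := fun n => hb n ▸ mul_lt_of_lt_one_left (hpos n) hq1
  have hanti : Antitone b := antitone_nat_of_succ_le fun n => (hstep n).le
  have hlim : Tendsto b atTop (𝓝 0) := by
    simpa [← eq_pow_mul_of_succ_eq_mul hb] using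
      (tendsto_pow_atTop_nhds_zero_of_lt_one hq0.le hq1).mul_const (b 0)
  have hsub : ∀ n, Icc (b (n + 1)) (b n) ⊆ Ioc 0 (b 0) := fun n =>
    Icc_subset_Ioc (hpos _) (hanti n.zero_le)
  have hhi : ∀ n, IntegrableOn h (Ioc (b (n + 1)) (b n)) := fun n =>
    ((hh.mono (hsub n)).integrableOn_isCompact isCompact_Icc).mono_set Ioc_subset_Icc_self
  have hi : ∀ n, IntegrableOn (fun t => Φ t * h t) (Ioc (b (n + 1)) (b n)) := fun n =>
    hint.mono_set (Ioc_subset_Icc_self.trans (hsub n))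
  have hh0' : ∀ n, ∀ t ∈ Ioc (b (n + 1)) (b n), 0 ≤ h t := fun n t ht =>
    hh0 t (hsub n (Ioc_subset_Icc_self ht))
  have hterm0 : ∀ n, 0 ≤ Φ (b n) * ∫ t in Ioc (b (n + 1)) (b n), h t := fun n =>
    mul_nonneg (hΦ0 _ (hsub n (right_mem_Icc.2 (hstep n).le)))
      (setIntegral_nonneg measurableSet_Ioc (hh0' n))
  have hupper : ∀ n, Φ (b n) * ∫ t in Ioc (b (n + 1)) (b n), h t ≤
      ∫ t in Ioc (b (n + 1)) (b n), Φ t * h t := fun n =>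
    (hΦ.mono (hsub n)).mul_setIntegral_Ioc_le_setIntegral_mul (hh0' n) (hhi n) (hi n)
  have hlower : ∀ n, q * ∫ t in Ioc (b (n + 1)) (b n), Φ t * h t ≤
      Φ (b (n + 1)) * ∫ t in Ioc (b (n + 2)) (b (n + 1)), h t := fun n => by
    have hshift : q * ∫ t in Ioc (b (n + 1)) (b n), h t ≤
        ∫ t in Ioc (b (n + 2)) (b (n + 1)), h t :=
      (hh.mono (Icc_subset_Ioc (hpos _) (hanti n.zero_le))).mul_setIntegral_Ioc_le_setIntegral_Ioc
        (hstep (n + 1)) (hstep n).le hq0.le (by rw [hb (n + 1), hb n]; ring)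
    calc q * ∫ t in Ioc (b (n + 1)) (b n), Φ t * h t
        ≤ q * (Φ (b (n + 1)) * ∫ t in Ioc (b (n + 1)) (b n), h t) :=
          mul_le_mul_of_nonneg_left
            ((hΦ.mono (hsub n)).setIntegral_mul_le_mul_setIntegral_Ioc (hh0' n) (hhi n) (hi n))
            hq0.le
      _ = Φ (b (n + 1)) * (q * ∫ t in Ioc (b (n + 1)) (b n), h t) := by ring
      _ ≤ _ := mul_le_mul_of_nonneg_left hshift (hΦ0 _ (hsub n (left_mem_Icc.2 (hstep n).le)))
  have hpieces := hasSum_setIntegral_Ioc_succ hanti hpos hlim hint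
  have hsum : Summable fun n => Φ (b n) * ∫ t in Ioc (b (n + 1)) (b n), h t :=
    .of_nonneg_of_le hterm0 hupper hpieces.summable
  refine ⟨?_, hasSum_le hupper hsum.hasSum hpieces⟩
  have hshifted := hasSum_le hlower (hpieces.mul_left q) ((hasSum_nat_add_iff' 1).2 hsum.hasSum)
  simp only [Finset.range_one, Finset.sum_singleton] at hshifted
  exact hshifted.trans (sub_le_self _ (hterm0 0))

end GeometricPartition

section Liminf

variable {α : Type*} {F : Filter α} {u v : α → ℝ}

lemma le_liminf_of_tendsto_of_eventually_le [F.NeBot] {L M : ℝ} (hv : Tendsto v F (𝓝 L))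
    (hvu : ∀ᶠ x in F, v x ≤ u x) (hu : ∀ᶠ x in F, u x ≤ M) : L ≤ liminf u F :=
  hv.liminf_eq ▸ liminf_le_liminf hvu hv.isBoundedUnder_ge
    (isBoundedUnder_of_eventually_le hu).isCoboundedUnder_ge

/-- No boundedness is needed: in `ℝ`, the `sSup` of a set that is unbounded above is `0`. -/
lemma liminf_nonneg_of_eventually_nonneg (hu : ∀ᶠ x in F, 0 ≤ u x) : 0 ≤ liminf u F := by
  rw [liminf_eq]
  by_cases hbdd : BddAbove {c | ∀ᶠ x in F, c ≤ u x}
  · exact le_csSup hbdd hu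
  · rw [Real.sSup_of_not_bddAbove hbdd]

end Liminf

section UnitInterval

variable {Φ h : ℝ → ℝ} {k q : ℝ}

lemma riemannSum_pow_mem_Icc (hq0 : 0 < q) (hq1 : q < 1) {n : ℕ} (hkn : k ≤ q ^ n)
    (hΦ : AntitoneOn Φ (Ioc 0 1)) (hΦ0 : ∀ t ∈ Ioc 0 1, 0 ≤ Φ t)
    (hh : AntitoneOn h (Ioc 0 1)) (hh0 : ∀ t ∈ Ioc 0 1, 0 ≤ h t)
    (hint : IntegrableOn (fun t => Φ t * h t) (Ioc 0 1)) :
    riemannSum Φ h (fun l => q ^ (n + l)) ∈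
      Icc (q * ∫ t in Ioc 0 k, Φ t * h t) (∫ t in Ioc 0 1, Φ t * h t) := by
  have hmono : ∀ s s', s' ≤ 1 → s ≤ s' →
      ∫ t in Ioc 0 s, Φ t * h t ≤ ∫ t in Ioc 0 s', Φ t * h t := fun s s' hs' hss' =>
    setIntegral_mono_set (hint.mono_set (Ioc_subset_Ioc_right hs'))
      ((ae_restrict_iff' measurableSet_Ioc).2 (ae_of_all _ fun t ht =>
        mul_nonneg (hΦ0 t (Ioc_subset_Ioc_right hs' ht)) (hh0 t (Ioc_subset_Ioc_right hs' ht))))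
      (Ioc_subset_Ioc_right hss').eventuallyLE
  have hb0 : q ^ n ≤ 1 := pow_le_one₀ hq0.le hq1.le
  have hsub : Ioc (0:ℝ) (q ^ n) ⊆ Ioc 0 1 := Ioc_subset_Ioc_right hb0
  have hS := riemannSum_mem_Icc_of_geometric (Φ := Φ) (h := h) (b := fun l => q ^ (n + l))
    hq0 hq1 (pow_pos hq0 n) (fun l => by rw [← add_assoc, pow_succ']) (hΦ.mono hsub)
    (fun t ht => hΦ0 t (hsub ht)) (hh.mono hsub) (fun t ht => hh0 t (hsub ht)) (hint.mono_set hsub)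
  exact ⟨(mul_le_mul_of_nonneg_left (hmono k _ hb0 hkn) hq0.le).trans hS.1,
    hS.2.trans (hmono _ 1 le_rfl hb0)⟩

/-- When `Φ h` is not integrable near `0`, the left-hand side is the junk value `0`. -/
lemma setIntegral_le_liminf_riemannSum (hΦ : AntitoneOn Φ (Ioc 0 1))
    (hΦ0 : ∀ t ∈ Ioc 0 1, 0 ≤ Φ t) (hh : AntitoneOn h (Ioc 0 1)) (hh0 : ∀ t ∈ Ioc 0 1, 0 ≤ h t)
    (hk : k ∈ Ioc 0 1) (m : ℝ → ℕ) (hm : ∀ a ∈ Ioo (0:ℝ) 1, k ≤ (1 - a) ^ m a) :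
    ∫ t in Ioc 0 k, Φ t * h t ≤
      liminf (fun a => riemannSum Φ h fun l => (1 - a) ^ (m a + l)) (𝓝[Ioo 0 1] 0) := by
  have hq : ∀ a ∈ Ioo (0:ℝ) 1, 0 < 1 - a ∧ 1 - a < 1 := fun a ha =>
    ⟨sub_pos.2 ha.2, sub_lt_self _ ha.1⟩
  by_cases hint : IntegrableOn (fun t => Φ t * h t) (Ioc 0 k)
  swap
  · rw [integral_undef hint]
    refine liminf_nonneg_of_eventually_nonneg (eventually_mem_nhdsWithin.mono fun a ha => ?_)
    have hpow : ∀ n : ℕ, (1 - a) ^ n ∈ Ioc 0 1 := fun n =>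
      ⟨pow_pos (hq a ha).1 n, pow_le_one₀ (hq a ha).1.le (hq a ha).2.le⟩
    exact riemannSum_nonneg (fun l => hΦ0 _ (hpow _)) fun l t ht =>
      hh0 t (Ioc_subset_Ioc (hpow _).1.le (hpow _).2 ht)
  have hΦh : AntitoneOn (fun t => Φ t * h t) (Icc k 1) := fun s hs t ht hst =>
    have hs' := Icc_subset_Ioc hk.1 le_rfl hs
    have ht' := Icc_subset_Ioc hk.1 le_rfl ht
    mul_le_mul (hΦ hs' ht' hst) (hh hs' ht' hst) (hh0 t ht') (hΦ0 s hs')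
  have hint1 : IntegrableOn (fun t => Φ t * h t) (Ioc 0 1) := by
    rw [← Ioc_union_Ioc_eq_Ioc hk.1.le hk.2]
    exact hint.union ((hΦh.integrableOn_isCompact isCompact_Icc).mono_set Ioc_subset_Icc_self)
  have : (𝓝[Ioo (0:ℝ) 1] 0).NeBot := left_nhdsWithin_Ioo_neBot zero_lt_one
  have hv : Tendsto (fun a : ℝ => (1 - a) * ∫ t in Ioc 0 k, Φ t * h t) (𝓝[Ioo 0 1] 0)
      (𝓝 (∫ t in Ioc 0 k, Φ t * h t)) := by
    simpa using ((Continuous.tendsto (by fun_prop) 0).mono_left nhdsWithin_le_nhds :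
      Tendsto (fun a : ℝ => (1 - a) * ∫ t in Ioc 0 k, Φ t * h t) _ _)
  have hS := fun a (ha : a ∈ Ioo (0:ℝ) 1) =>
    riemannSum_pow_mem_Icc (hq a ha).1 (hq a ha).2 (hm a ha) hΦ hΦ0 hh hh0 hint1
  exact le_liminf_of_tendsto_of_eventually_le hv
    (eventually_mem_nhdsWithin.mono fun a ha => (hS a ha).1)
    (eventually_mem_nhdsWithin.mono fun a ha => (hS a ha).2)

end UnitInterval

theorem stmt19_general (g h : ℝ → ℝ)
    (hg0 : ∀ u ∈ Set.Ioc (0:ℝ) 1, 0 ≤ g u) (hgmono : AntitoneOn g (Set.Ioc 0 1))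
    (hgint : IntegrableOn g (Set.Ioc 0 1))
    (hh0 : ∀ u ∈ Set.Ioc (0:ℝ) 1, 0 ≤ h u) (hhmono : AntitoneOn h (Set.Ioc 0 1))
    (G : ℝ → ℝ) (hGmono : MonotoneOn G (Set.Ici 0)) (hG0 : ∀ x ≥ (0:ℝ), 0 ≤ G x)
    (k : ℝ) (hk : k ∈ Set.Ioc (0:ℝ) 1) (m : ℝ → ℕ)
    (hm : ∀ a ∈ Set.Ioo (0:ℝ) 1, (1 - a) ^ (m a + 1) ≤ k ∧ k < (1 - a) ^ (m a)) :
    (∫ t in Set.Ioc (0:ℝ) k, G ((∫ u in Set.Ioc (0:ℝ) t, g u) / t) * h t) ≤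
      Filter.liminf (fun a : ℝ =>
          ∑' l : ℕ, G ((∫ u in Set.Ioc (0:ℝ) ((1 - a) ^ (m a + l)), g u) / (1 - a) ^ (m a + l)) *
            ∫ t in Set.Ioc ((1 - a) ^ (m a + l + 1)) ((1 - a) ^ (m a + l)), h t)
        (nhdsWithin 0 (Set.Ioo 0 1)) := by
  have havg0 : ∀ t ∈ Ioc (0:ℝ) 1, 0 ≤ (∫ u in Ioc 0 t, g u) / t := fun t ht =>
    div_nonneg (setIntegral_nonneg measurableSet_Ioc fun u hu =>
      hg0 u (Ioc_subset_Ioc_right ht.2 hu)) ht.1.le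
  have hΦ : AntitoneOn (fun t => G ((∫ u in Ioc 0 t, g u) / t)) (Ioc 0 1) := fun s hs t ht hst =>
    hGmono (havg0 t ht) (havg0 s hs) (antitoneOn_integral_Ioc_zero_div hgmono hgint hs ht hst)
  exact setIntegral_le_liminf_riemannSum hΦ (fun t ht => hG0 _ (havg0 t ht)) hhmono hh0 hk m
    fun a ha => (hm a ha).2.le

/-- Riemann-sum convergence step: the lower Riemann-type sums over the partition by the
points `(1-a)^{m_a+l}` have liminf, as `a → 0⁺`, at least `∫_0^k G((1/t)∫_0^t g) h`. -/
theorem stmt19 (g h : ℝ → ℝ)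
    (hg0 : ∀ u ∈ Set.Ioc (0:ℝ) 1, 0 ≤ g u) (hgmono : AntitoneOn g (Set.Ioc 0 1))
    (hgint : IntegrableOn g (Set.Ioc 0 1))
    (hh0 : ∀ u ∈ Set.Ioc (0:ℝ) 1, 0 ≤ h u) (hhmono : AntitoneOn h (Set.Ioc 0 1))
    (hhint : IntegrableOn h (Set.Ioc 0 1))
    (G : ℝ → ℝ) (hGmono : MonotoneOn G (Set.Ici 0)) (hG0 : ∀ x ≥ (0:ℝ), 0 ≤ G x)
    (k : ℝ) (hk : k ∈ Set.Ioc (0:ℝ) 1) (m : ℝ → ℕ)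
    (hm : ∀ a ∈ Set.Ioo (0:ℝ) 1, (1 - a) ^ (m a + 1) ≤ k ∧ k < (1 - a) ^ (m a)) :
    (∫ t in Set.Ioc (0:ℝ) k, G ((∫ u in Set.Ioc (0:ℝ) t, g u) / t) * h t) ≤
      Filter.liminf (fun a : ℝ =>
          ∑' l : ℕ, G ((∫ u in Set.Ioc (0:ℝ) ((1 - a) ^ (m a + l)), g u) / (1 - a) ^ (m a + l)) *
            ∫ t in Set.Ioc ((1 - a) ^ (m a + l + 1)) ((1 - a) ^ (m a + l)), h t)
        (nhdsWithin 0 (Set.Ioo 0 1)) :=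
  stmt19_general g h hg0 hgmono hgint hh0 hhmono G hGmono hG0 k hk m hm
end
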